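/- For the stochastic mass action system with species $(A,B,C,D,E)$ and reactions $A+B\to C+E$, $C+E\to B+D$, $B+D\to C+E$, $C\to A$, $B\to D$, $D\to E$, $E\to B$, under discrete reachability: every reachable step preserves $\|x\|_1$ and keeps $x_2+x_4+x_5\geq 1$ if it holds initially (the only reaction decreasing $x_2+x_4+x_5$ is $B+D\to C+E$, requiring $x_2\geq1$ and $x_4\geq1$). If $\|X(0)\|_1 \geq 2$ and $X_2(0)+X_4(0)+X_5(0)\geq 1$, then no extinction set for any of the seven reactions is reachable from $X(0)$. -/

import Mathlib

open Finset

/-- A state: copy-numbers of the `d` species. -/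
abbrev State (d : ℕ) := Fin d → ℕ

/-- A reaction: a pair (source complex, product complex). -/
abbrev Rxn (d : ℕ) := (State d) × (State d)

/-- A reaction with source `y` is active at `x` iff `x ≥ y` componentwise. -/
def active {d : ℕ} (y x : State d) : Prop := ∀ i, y i ≤ x i

/-- One-step reachability: from `x` jump to `x + y' - y` whenever `x ≥ y` for a reaction `y → y'`. -/
def step {d : ℕ} (R : List (Rxn d)) (x x' : State d) : Prop :=
  ∃ r ∈ R, active r.1 x ∧ ∀ i, x' i + r.1 i = x i + r.2 i

/-- Reachability: reflexive-transitive closure of one-step reachability. -/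
def reach {d : ℕ} (R : List (Rxn d)) : State d → State d → Prop :=
  Relation.ReflTransGen (step R)

/-- A set is closed if no state outside it is reachable from inside it. -/
def closedSet {d : ℕ} (R : List (Rxn d)) (Γ : Set (State d)) : Prop :=
  ∀ x ∈ Γ, ∀ x', reach R x x' → x' ∈ Γ

/-- An extinction set for a reaction: a closed set on which the reaction is never active. -/
def extinctionSet {d : ℕ} (R : List (Rxn d)) (r : Rxn d) (Γ : Set (State d)) : Prop :=
  closedSet R Γ ∧ ∀ x ∈ Γ, ¬ active r.1 x

/-- No extinction set for `r` is reachable from `x`. -/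
def noExtSetReachable {d : ℕ} (R : List (Rxn d)) (r : Rxn d) (x : State d) : Prop :=
  ∀ Γ : Set (State d), extinctionSet R r Γ → ∀ x' ∈ Γ, ¬ reach R x x'

/-- The network A+B → C+E, C+E → B+D, B+D → C+E, C → A, B → D, D → E, E → B. -/
def N5 : List (Rxn 5) :=
  [(![1,1,0,0,0], ![0,0,1,0,1]), (![0,0,1,0,1], ![0,1,0,1,0]), (![0,1,0,1,0], ![0,0,1,0,1]),
   (![0,0,1,0,0], ![1,0,0,0,0]), (![0,1,0,0,0], ![0,0,0,1,0]),
   (![0,0,0,1,0], ![0,0,0,0,1]), (![0,0,0,0,1], ![0,1,0,0,0])]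

/-! Mass is conserved, and the species `B, D, E` never all die out: the only reaction that
lowers their number, `B + D → C + E`, produces an `E`. These tokens circulate along
`B → D → E → B`, so they can all be collected in `B`. From there, with mass at least 2, one
reaches a state with `C ≥ 1` and `E ≥ 1`: by `B → D` and `B + D → C + E` if there are two
tokens, by `B → D → E` if a `C` is already present, and by `A + B → C + E` otherwise. From such a
state every source complex is reached in at most two steps, so every closed set reachable from
`X(0)` contains a state where any given reaction is active. -/

section Network

variable {d : ℕ} {R : List (Rxn d)}

theorem reach.refl (x : State d) : reach R x x := Relation.ReflTransGen.refl

theorem reach.single {x y : State d} (h : step R x y) : reach R x y :=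
  Relation.ReflTransGen.single h

theorem reach.head {x y z : State d} (h : step R x y) (h' : reach R y z) : reach R x z :=
  Relation.ReflTransGen.head h h'

theorem reach.trans {x y z : State d} (h : reach R x y) (h' : reach R y z) : reach R x z :=
  Relation.ReflTransGen.trans h h'

theorem reach_invariant {P : State d → Prop} (hP : ∀ x x', step R x x' → P x → P x')
    {x x' : State d} (h : reach R x x') (hx : P x) : P x' := by
  induction h with
  | refl => exact hx
  | tail _ hstep ih => exact hP _ _ hstep ih

theorem sum_add_sum_source_eq {r : Rxn d} {x x' : State d} (S : Finset (Fin d))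
    (h : ∀ i, x' i + r.1 i = x i + r.2 i) :
    ∑ i ∈ S, x' i + ∑ i ∈ S, r.1 i = ∑ i ∈ S, x i + ∑ i ∈ S, r.2 i := by
  simp only [← sum_add_distrib, h]

theorem sum_eq_of_step (hR : ∀ r ∈ R, ∑ i, r.1 i = ∑ i, r.2 i) {x x' : State d}
    (h : step R x x') : ∑ i, x' i = ∑ i, x i := by
  obtain ⟨r, hr, -, heq⟩ := h
  have := sum_add_sum_source_eq univ heq
  rw [hR r hr] at this
  omega

/-- After firing `r` the state dominates `r.2`, so a reaction that lowers the count on `S` cannot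
empty `S` if its product meets `S`. -/
theorem one_le_sum_of_step {S : Finset (Fin d)}
    (hR : ∀ r ∈ R, ∑ i ∈ S, r.1 i ≤ ∑ i ∈ S, r.2 i ∨ 1 ≤ ∑ i ∈ S, r.2 i) {x x' : State d}
    (h : step R x x') (hx : 1 ≤ ∑ i ∈ S, x i) : 1 ≤ ∑ i ∈ S, x' i := by
  obtain ⟨r, hr, hact, heq⟩ := h
  have hsum := sum_add_sum_source_eq S heq
  have hprod : ∑ i ∈ S, r.2 i ≤ ∑ i ∈ S, x' i :=
    sum_le_sum fun i _ => by have := heq i; have := hact i; omega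
  rcases hR r hr with h | h <;> omega

theorem sum_eq_of_reach (hR : ∀ r ∈ R, ∑ i, r.1 i = ∑ i, r.2 i) {x x' : State d}
    (h : reach R x x') : ∑ i, x' i = ∑ i, x i :=
  reach_invariant (P := fun y => ∑ i, y i = ∑ i, x i)
    (fun _ _ hs hy => (sum_eq_of_step hR hs).trans hy) h rfl

theorem noExtSetReachable_of_forall_reach {r : Rxn d} {x₀ : State d}
    (h : ∀ x, reach R x₀ x → ∃ z, reach R x z ∧ active r.1 z) : noExtSetReachable R r x₀ := by
  rintro Γ ⟨hclosed, hinactive⟩ x hxΓ hx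
  obtain ⟨z, hxz, hz⟩ := h x hx
  exact hinactive z (hclosed x hxΓ z hxz) hz

end Network

namespace N5

theorem sum_source_eq_sum_product : ∀ r ∈ N5, ∑ i, r.1 i = ∑ i, r.2 i := by
  decide

theorem one_le_BDE_of_step {x x' : State 5} (h : step N5 x x') (hx : 1 ≤ x 1 + x 3 + x 4) :
    1 ≤ x' 1 + x' 3 + x' 4 := by
  have hBDE : ∀ y : State 5, y 1 + y 3 + y 4 = ∑ i ∈ {1, 3, 4}, y i := fun y => by
    simp [add_assoc]
  have hN5 : ∀ r ∈ N5,
      ∑ i ∈ {1, 3, 4}, r.1 i ≤ ∑ i ∈ {1, 3, 4}, r.2 i ∨ 1 ≤ ∑ i ∈ {1, 3, 4}, r.2 i := by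
    decide
  rw [hBDE] at hx ⊢
  exact one_le_sum_of_step hN5 h hx

theorem step_AB (a b c d e : ℕ) : step N5 ![a + 1, b + 1, c, d, e] ![a, b, c + 1, d, e + 1] :=
  ⟨N5[0], by simp [N5], fun i => by fin_cases i <;> simp [N5],
    fun i => by fin_cases i <;> simp [N5]⟩

theorem step_CE (a b c d e : ℕ) : step N5 ![a, b, c + 1, d, e + 1] ![a, b + 1, c, d + 1, e] :=
  ⟨N5[1], by simp [N5], fun i => by fin_cases i <;> simp [N5],
    fun i => by fin_cases i <;> simp [N5]⟩

theorem step_BD (a b c d e : ℕ) : step N5 ![a, b + 1, c, d + 1, e] ![a, b, c + 1, d, e + 1] :=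
  ⟨N5[2], by simp [N5], fun i => by fin_cases i <;> simp [N5],
    fun i => by fin_cases i <;> simp [N5]⟩

theorem step_C (a b c d e : ℕ) : step N5 ![a, b, c + 1, d, e] ![a + 1, b, c, d, e] :=
  ⟨N5[3], by simp [N5], fun i => by fin_cases i <;> simp [N5],
    fun i => by fin_cases i <;> simp [N5]⟩

theorem step_B (a b c d e : ℕ) : step N5 ![a, b + 1, c, d, e] ![a, b, c, d + 1, e] :=
  ⟨N5[4], by simp [N5], fun i => by fin_cases i <;> simp [N5],
    fun i => by fin_cases i <;> simp [N5]⟩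

theorem step_D (a b c d e : ℕ) : step N5 ![a, b, c, d + 1, e] ![a, b, c, d, e + 1] :=
  ⟨N5[5], by simp [N5], fun i => by fin_cases i <;> simp [N5],
    fun i => by fin_cases i <;> simp [N5]⟩

theorem step_E (a b c d e : ℕ) : step N5 ![a, b, c, d, e + 1] ![a, b + 1, c, d, e] :=
  ⟨N5[6], by simp [N5], fun i => by fin_cases i <;> simp [N5],
    fun i => by fin_cases i <;> simp [N5]⟩

theorem reach_D_to_E (a b c d e : ℕ) : reach N5 ![a, b, c, d, e] ![a, b, c, 0, d + e] := by
  induction d generalizing e with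
  | zero => simpa using reach.refl _
  | succ d ih =>
    rw [add_right_comm, add_assoc]
    exact reach.head (step_D a b c d e) (ih (e + 1))

theorem reach_E_to_B (a b c d e : ℕ) : reach N5 ![a, b, c, d, e] ![a, b + e, c, d, 0] := by
  induction e generalizing b with
  | zero => exact reach.refl _
  | succ e ih =>
    rw [← add_assoc, add_right_comm]
    exact reach.head (step_E a b c d e) (ih (b + 1))

theorem reach_collect_B (a b c d e : ℕ) : reach N5 ![a, b, c, d, e] ![a, b + d + e, c, 0, 0] := by
  simpa [add_assoc] using (reach_D_to_E a b c d e).trans (reach_E_to_B a b c 0 (d + e))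

theorem exists_reach_C_E_of_collected {a n c : ℕ} (hn : 1 ≤ n) (hm : 2 ≤ a + n + c) :
    ∃ a' b' c' d' e', reach N5 ![a, n, c, 0, 0] ![a', b', c' + 1, d', e' + 1] := by
  rcases n with _ | _ | m
  · omega
  · rcases c with _ | c
    · rcases a with _ | a
      · omega
      · exact ⟨_, _, _, _, _, .single (step_AB a 0 0 0 0)⟩
    · exact ⟨_, _, _, _, _,
        reach.head (step_B a 0 (c + 1) 0 0) (.single (step_D a 0 (c + 1) 0 0))⟩
  · exact ⟨_, _, _, _, _, reach.head (step_B a (m + 1) c 0 0) (.single (step_BD a m c 0 0))⟩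

theorem exists_reach_C_E {x : State 5} (hm : 2 ≤ ∑ i, x i) (hBDE : 1 ≤ x 1 + x 3 + x 4) :
    ∃ a b c d e, reach N5 x ![a, b, c + 1, d, e + 1] := by
  have hx : x = ![x 0, x 1, x 2, x 3, x 4] := by
    funext i; fin_cases i <;> rfl
  rw [Fin.sum_univ_five] at hm
  obtain ⟨a, b, c, d, e, h⟩ := exists_reach_C_E_of_collected (a := x 0) (c := x 2) hBDE (by omega)
  exact ⟨a, b, c, d, e, hx ▸ (reach_collect_B _ _ _ _ _).trans h⟩

theorem exists_reach_active (a b c d e : ℕ) :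
    ∀ r ∈ N5, ∃ z, reach N5 ![a, b, c + 1, d, e + 1] z ∧ active r.1 z := by
  simp only [N5, List.mem_cons, List.not_mem_nil, or_false, forall_eq_or_imp, forall_eq]
  refine ⟨⟨_, reach.head (step_C a b c d (e + 1)) (.single (step_E (a + 1) b c d e)), ?_⟩,
    ⟨_, reach.refl _, ?_⟩, ⟨_, .single (step_CE a b c d e), ?_⟩, ⟨_, reach.refl _, ?_⟩,
    ⟨_, .single (step_E a b (c + 1) d e), ?_⟩, ⟨_, .single (step_CE a b c d e), ?_⟩,
    ⟨_, reach.refl _, ?_⟩⟩ <;>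
  intro i <;> fin_cases i <;> simp

end N5

/-- Every step preserves the total mass and preserves `x₂ + x₄ + x₅ ≥ 1`; if the total mass
is at least 2 and `x₂ + x₄ + x₅ ≥ 1` initially, then no extinction set for any of the seven
reactions is reachable from the initial state. -/
theorem no_extinction_N5 (x0 : State 5)
    (hm : 2 ≤ ∑ i, x0 i) (hb : 1 ≤ x0 1 + x0 3 + x0 4) :
    (∀ x x' : State 5, step N5 x x' → ∑ i, x' i = ∑ i, x i) ∧
    (∀ x x' : State 5, step N5 x x' → 1 ≤ x 1 + x 3 + x 4 → 1 ≤ x' 1 + x' 3 + x' 4) ∧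
    (∀ r ∈ N5, noExtSetReachable N5 r x0) := by
  refine ⟨fun _ _ => sum_eq_of_step N5.sum_source_eq_sum_product,
    fun _ _ => N5.one_le_BDE_of_step, fun r hr => noExtSetReachable_of_forall_reach fun x hx => ?_⟩
  have hmx : 2 ≤ ∑ i, x i := by rwa [sum_eq_of_reach N5.sum_source_eq_sum_product hx]
  have hbx : 1 ≤ x 1 + x 3 + x 4 := reach_invariant (fun _ _ => N5.one_le_BDE_of_step) hx hb
  obtain ⟨a, b, c, d, e, hxz⟩ := N5.exists_reach_C_E hmx hbx
  obtain ⟨w, hzw, hw⟩ := N5.exists_reach_active a b c d e r hr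
  exact ⟨w, hxz.trans hzw, hw⟩
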